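/- The deterministic equivalent ILP-3DKP(Z) has the same optimal value as the TSS-3DKP, provided Z is an upper bound such that some optimal solution of TSS-3DKP uses at most Z printers: every feasible solution of ILP-3DKP(Z) induces a feasible TSS-3DKP solution with equal objective, and every TSS-3DKP solution with a_p ≤ Z induces a feasible ILP-3DKP(Z) solution with equal objective (setting y_j = 1 for j ≤ a_p and 0 otherwise). -/

import Mathlib

/-!
The symmetry-breaking constraints make the printer indicators of a feasible ILP solution
antitone, so `y` is the indicator of an initial segment `{0, …, c - 1}` and `∑ j < Z, y j = c`
plays the role of the number `ap` of printers. A printer outside this segment has zero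
capacity and, since every product takes positive printing time, prints nothing; hence
the printing sums over `j < c` and over `j < Z` agree, and both directions only truncate
or extend the printer range.
-/

section
variable {N S : Type} [Fintype N] [Fintype S]

/-- Feasibility of a solution of the deterministic equivalent ILP-3DKP(Z):
binary printer indicators `y` (with the symmetry-breaking constraints
`y j ≤ y (j-1)`), first-stage variables `a`, `ab`, and scenario-indexed
second-stage variables `as`, `p`; constraints (13)–(25) of the paper. -/
def ILPfeas (Np : Finset N) (d : S → N → ℕ) (w v m t : N → ℕ)
    (wp vp wb vb W V M T Z : ℕ)
    (y : ℕ → ℕ) (a : N → ℕ) (ab : ℕ) (as : S → N → ℕ) (p : S → N → ℕ → ℕ) : Prop :=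
  (∀ j, y j ≤ 1) ∧ (∀ j, Z ≤ j → y j = 0) ∧
  (∀ j, 1 ≤ j → y j ≤ y (j - 1)) ∧
  (∑ i, a i * w i) + ab * wb + (∑ j ∈ Finset.range Z, y j) * wp ≤ W ∧
  (∑ i, a i * v i) + ab * vb + (∑ j ∈ Finset.range Z, y j) * vp ≤ V ∧
  ab ≤ (∑ j ∈ Finset.range Z, y j) * M ∧
  (∀ s, ∀ i ∉ Np, as s i ≤ d s i) ∧
  (∀ s, ∀ i ∈ Np, as s i + ∑ j ∈ Finset.range Z, p s i j ≤ d s i) ∧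
  (∀ s i, as s i ≤ a i) ∧
  (∀ s, (∑ i ∈ Np, ∑ j ∈ Finset.range Z, p s i j * m i) ≤ ab) ∧
  (∀ s j, j < Z → (∑ i ∈ Np, p s i j * t i) ≤ T * y j) ∧
  (∀ s i j, Z ≤ j → p s i j = 0)

/-- Feasibility of a (two-stage) solution of the TSS-3DKP: first-stage decision
`(a, ap, ab)` and, for every scenario, second-stage decisions `as`, `p` using
printers `0, …, ap - 1`. -/
def TSSfeas (Np : Finset N) (d : S → N → ℕ) (w v m t : N → ℕ)
    (wp vp wb vb W V M T : ℕ)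
    (a : N → ℕ) (ap ab : ℕ) (as : S → N → ℕ) (p : S → N → ℕ → ℕ) : Prop :=
  (∑ i, a i * w i) + ap * wp + ab * wb ≤ W ∧
  (∑ i, a i * v i) + ap * vp + ab * vb ≤ V ∧
  ab ≤ ap * M ∧
  (∀ s, ∀ i ∉ Np, as s i ≤ d s i) ∧
  (∀ s, ∀ i ∈ Np, as s i + ∑ j ∈ Finset.range ap, p s i j ≤ d s i) ∧
  (∀ s i, as s i ≤ a i) ∧
  (∀ s, (∑ i ∈ Np, ∑ j ∈ Finset.range ap, p s i j * m i) ≤ ab) ∧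
  (∀ s j, j < ap → (∑ i ∈ Np, p s i j * t i) ≤ T) ∧
  (∀ s i j, ap ≤ j → p s i j = 0)

/-- The (expected total reward) objective value, where printing variables for
printers `0, …, K - 1` are counted. -/
noncomputable def objVal (Np : Finset N) (q : S → ℝ) (r : N → ℝ) (α : ℝ) (K : ℕ)
    (as : S → N → ℕ) (p : S → N → ℕ → ℕ) : ℝ :=
  ∑ s, q s * ((∑ i, (as s i : ℝ) * r i)
    + α * ∑ i ∈ Np, ∑ j ∈ Finset.range K, (p s i j : ℝ) * r i)

theorem Finset.sum_range_eq_sum_range_of_le {M : Type*} [AddCommMonoid M] {f : ℕ → M} {m n : ℕ}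
    (hmn : m ≤ n) (hf : ∀ j, m ≤ j → j < n → f j = 0) :
    ∑ j ∈ Finset.range m, f j = ∑ j ∈ Finset.range n, f j := by
  rw [← Finset.sum_range_add_sum_Ico f hmn,
    Finset.sum_eq_zero fun j hj => hf j (Finset.mem_Ico.1 hj).1 (Finset.mem_Ico.1 hj).2, add_zero]

theorem Finset.sum_range_ite_lt {c n : ℕ} (hcn : c ≤ n) :
    ∑ j ∈ Finset.range n, (if j < c then 1 else 0 : ℕ) = c := by
  rw [← Finset.sum_range_eq_sum_range_of_le hcn fun j hj _ => if_neg hj.not_gt,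
    Finset.sum_ite_of_true fun j hj => Finset.mem_range.1 hj]
  simp

theorem exists_eq_ite_lt_of_antitone {y : ℕ → ℕ} {n : ℕ} (hy : Antitone y) (hle : ∀ j, y j ≤ 1)
    (hn : y n = 0) : ∃ c ≤ n, ∀ j, y j = if j < c then 1 else 0 := by
  have hex : ∃ j, y j = 0 := ⟨n, hn⟩
  refine ⟨Nat.find hex, Nat.find_le hn, fun j => ?_⟩
  split_ifs with hj
  · have := Nat.find_min hex hj
    have := hle j
    omega
  · have := hy (not_lt.1 hj)
    rw [Nat.find_spec hex] at this
    omega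

def truncatePrinters (K : ℕ) (p : S → N → ℕ → ℕ) : S → N → ℕ → ℕ :=
  fun s i j => if j < K then p s i j else 0

section
omit [Fintype S]
variable {Np : Finset N} {d : S → N → ℕ} {w v m t : N → ℕ} {wp vp wb vb W V M T Z : ℕ}
  {y : ℕ → ℕ} {a : N → ℕ} {ab : ℕ} {as : S → N → ℕ} {p : S → N → ℕ → ℕ}

theorem ILPfeas.exists_eq_ite_lt (hf : ILPfeas Np d w v m t wp vp wb vb W V M T Z y a ab as p) :
    ∃ c ≤ Z, ∀ j, y j = if j < c then 1 else 0 :=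
  have ⟨hle, hZ, hanti, _⟩ := hf
  exists_eq_ite_lt_of_antitone (antitone_nat_of_succ_le fun j => hanti (j + 1) le_add_self) hle
    (hZ Z le_rfl)

/-- A printer that is not bought has time capacity `T * 0`, while every product takes
positive time to print. -/
theorem ILPfeas.printing_eq_zero (hf : ILPfeas Np d w v m t wp vp wb vb W V M T Z y a ab as p)
    (ht : ∀ i ∈ Np, 1 ≤ t i) (s : S) {i : N} (hi : i ∈ Np) {j : ℕ} (hj : y j = 0) :
    p s i j = 0 := by
  obtain ⟨-, -, -, -, -, -, -, -, -, -, htime, hpZ⟩ := hf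
  rcases lt_or_ge j Z with hjZ | hjZ
  · have htime := htime s j hjZ
    rw [hj, mul_zero, Nat.le_zero, Finset.sum_eq_zero_iff] at htime
    exact (Nat.mul_eq_zero.1 (htime i hi)).resolve_right (Nat.one_le_iff_ne_zero.1 (ht i hi))
  · exact hpZ s i j hjZ

theorem ILPfeas.tssfeas_truncatePrinters
    (hf : ILPfeas Np d w v m t wp vp wb vb W V M T Z y a ab as p) {c : ℕ} (hcZ : c ≤ Z)
    (hy : ∀ j, y j = if j < c then 1 else 0)
    (hp : ∀ s, ∀ i ∈ Np, ∀ j, c ≤ j → p s i j = 0) :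
    TSSfeas Np d w v m t wp vp wb vb W V M T a c ab as (truncatePrinters c p) := by
  obtain ⟨-, -, -, hW, hV, hM, hd, hdp, ha, hb, htime, -⟩ := hf
  have hc : ∑ j ∈ Finset.range Z, y j = c := by
    simp only [hy]
    exact Finset.sum_range_ite_lt hcZ
  have hsum : ∀ s, ∀ i ∈ Np, ∀ g : ℕ → ℕ, g 0 = 0 →
      ∑ j ∈ Finset.range c, g (truncatePrinters c p s i j) = ∑ j ∈ Finset.range Z, g (p s i j) :=
    fun s i hi g hg => by
      rw [Finset.sum_congr rfl fun j hj => by rw [truncatePrinters, if_pos (Finset.mem_range.1 hj)]]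
      exact Finset.sum_range_eq_sum_range_of_le hcZ fun j hj _ => by rw [hp s i hi j hj, hg]
  rw [hc] at hW hV hM
  refine ⟨by rwa [add_right_comm], by rwa [add_right_comm], hM, hd, fun s i hi => ?_, ha,
    fun s => ?_, fun s j hj => ?_, fun s i j hj => if_neg hj.not_gt⟩
  · exact (hsum s i hi (fun x => x) rfl).symm ▸ hdp s i hi
  · rw [Finset.sum_congr rfl fun i hi => hsum s i hi (· * m i) (zero_mul _)]
    exact hb s
  · have htime := htime s j (hj.trans_le hcZ)
    rw [hy, if_pos hj, mul_one] at htime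
    simpa only [truncatePrinters, if_pos hj] using htime

theorem TSSfeas.ilpfeas_ite_lt {ap : ℕ}
    (hf : TSSfeas Np d w v m t wp vp wb vb W V M T a ap ab as p) (hZ : ap ≤ Z) :
    ILPfeas Np d w v m t wp vp wb vb W V M T Z (fun j => if j < ap then 1 else 0) a ab as p := by
  obtain ⟨hW, hV, hM, hd, hdp, ha, hb, htime, hp⟩ := hf
  have hsum : ∀ s i (g : ℕ → ℕ), g 0 = 0 →
      ∑ j ∈ Finset.range ap, g (p s i j) = ∑ j ∈ Finset.range Z, g (p s i j) :=
    fun s i g hg => Finset.sum_range_eq_sum_range_of_le hZ fun j hj _ => by rw [hp s i j hj, hg]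
  rw [← Finset.sum_range_ite_lt hZ] at hW hV hM
  refine ⟨fun j => ?_, fun j hj => if_neg (hZ.trans hj).not_gt, fun j hj => ?_,
    by rwa [add_right_comm], by rwa [add_right_comm], hM, hd, fun s i hi => ?_, ha, fun s => ?_,
    fun s j _ => ?_, fun s i j hj => hp s i j (hZ.trans hj)⟩
  · beta_reduce
    split_ifs <;> omega
  · beta_reduce
    split_ifs <;> omega
  · exact hsum s i (fun x => x) rfl ▸ hdp s i hi
  · rw [← Finset.sum_congr rfl fun i _ => hsum s i (· * m i) (zero_mul _)]
    exact hb s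
  · beta_reduce
    split_ifs with hj
    · rw [mul_one]
      exact htime s j hj
    · rw [mul_zero, Nat.le_zero]
      exact Finset.sum_eq_zero fun i _ => by rw [hp s i j (not_lt.1 hj), zero_mul]

end

theorem objVal_truncatePrinters (Np : Finset N) (q : S → ℝ) (r : N → ℝ) (α : ℝ) (K : ℕ)
    (as : S → N → ℕ) (p : S → N → ℕ → ℕ) :
    objVal Np q r α K as (truncatePrinters K p) = objVal Np q r α K as p := by
  unfold objVal truncatePrinters
  refine Finset.sum_congr rfl fun s _ => ?_
  congr 3
  refine Finset.sum_congr rfl fun i _ => Finset.sum_congr rfl fun j hj => ?_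
  rw [if_pos (Finset.mem_range.1 hj)]

theorem objVal_eq_of_le {Np : Finset N} (q : S → ℝ) (r : N → ℝ) (α : ℝ) {K Z : ℕ}
    (as : S → N → ℕ) {p : S → N → ℕ → ℕ} (hKZ : K ≤ Z)
    (hp : ∀ s, ∀ i ∈ Np, ∀ j, K ≤ j → p s i j = 0) :
    objVal Np q r α K as p = objVal Np q r α Z as p := by
  unfold objVal
  refine Finset.sum_congr rfl fun s _ => ?_
  congr 3
  refine Finset.sum_congr rfl fun i hi => ?_
  exact Finset.sum_range_eq_sum_range_of_le hKZ fun j hj _ => by simp [hp s i hi j hj]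

/-- the deterministic equivalent ILP-3DKP(Z) has the same optimal
value as the TSS-3DKP (for any `Z` bounding the number of printers of some optimal
solution): every feasible ILP solution induces a feasible TSS-3DKP solution with
equal objective, and every TSS-3DKP solution with `ap ≤ Z` induces a feasible ILP
solution with equal objective, setting `y j = 1` for `j < ap` and `0` otherwise. -/
theorem stmt_11 (Np : Finset N) (q : S → ℝ) (d : S → N → ℕ) (r : N → ℝ) (α : ℝ)
    (w v m t : N → ℕ) (wp vp wb vb W V M T Z : ℕ)
    (ht : ∀ i ∈ Np, 1 ≤ t i) :
    (∀ (y : ℕ → ℕ) (a : N → ℕ) (ab : ℕ) (as : S → N → ℕ) (p : S → N → ℕ → ℕ),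
      ILPfeas Np d w v m t wp vp wb vb W V M T Z y a ab as p →
      ∃ (ap : ℕ) (as' : S → N → ℕ) (p' : S → N → ℕ → ℕ),
        ap ≤ Z ∧
        TSSfeas Np d w v m t wp vp wb vb W V M T a ap ab as' p' ∧
        objVal Np q r α ap as' p' = objVal Np q r α Z as p) ∧
    (∀ (a : N → ℕ) (ap ab : ℕ) (as : S → N → ℕ) (p : S → N → ℕ → ℕ),
      TSSfeas Np d w v m t wp vp wb vb W V M T a ap ab as p →
      ap ≤ Z →
      ∃ (y : ℕ → ℕ) (as' : S → N → ℕ) (p' : S → N → ℕ → ℕ),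
        (∀ j, y j = if j < ap then 1 else 0) ∧
        ILPfeas Np d w v m t wp vp wb vb W V M T Z y a ab as' p' ∧
        objVal Np q r α Z as' p' = objVal Np q r α ap as p) := by
  refine ⟨fun y a ab as p hf => ?_, fun a ap ab as p hf hapZ => ?_⟩
  · obtain ⟨c, hcZ, hy⟩ := hf.exists_eq_ite_lt
    have hp : ∀ s, ∀ i ∈ Np, ∀ j, c ≤ j → p s i j = 0 := fun s i hi j hj =>
      hf.printing_eq_zero ht s hi (by rw [hy, if_neg hj.not_gt])
    refine ⟨c, as, truncatePrinters c p, hcZ, hf.tssfeas_truncatePrinters hcZ hy hp, ?_⟩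
    rw [objVal_truncatePrinters, objVal_eq_of_le q r α as hcZ hp]
  · refine ⟨_, as, p, fun j => rfl, hf.ilpfeas_ite_lt hapZ, ?_⟩
    obtain ⟨-, -, -, -, -, -, -, -, hp⟩ := hf
    exact (objVal_eq_of_le q r α as hapZ fun s i _ j hj => hp s i j hj).symm

end
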